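/- arXiv:0808.0135 — 2 statements merged into one kernel-verified Lean document; each statement's English description precedes it below -/
import Mathlib

section
/- Suppose a solution component has the representation φ(x,λ) = e^{iaλx} + ∫₀ˣ K₁₁(x,t) e^{iaλt} dt + ∫₀ˣ K₁₂(x,t) e^{ibλt} dt with K₁₁, K₁₂ bounded measurable on the triangle {0 ≤ t ≤ x ≤ 1} and a < 0 < b. Then there is a constant C such that for all λ with Im λ > 0 and all x ∈ [0,1], |φ(x,λ) − e^{iaλx}| ≤ (C / Im λ)·|e^{iaλx}|. -/
/-!
For `Im λ > 0` we have `‖e^{icλt}‖ = e^{-c Im λ t}`, so integrating a kernel bounded by `M`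
against it over `[0, x]` gives at most `M / (|c| Im λ) · max 1 ‖e^{icλx}‖`: the integral of a real
exponential is its increment divided by the rate. Since `a < 0 < b`, the factor `e^{iaλx}` is
increasing in `x`, hence at least `1`, and dominates the decaying `e^{ibλx}`.
-/

open Complex MeasureTheory Set

lemma integral_exp_mul_le_max_div_abs {ρ x : ℝ} (hρ : ρ ≠ 0) :
    ∫ t in (0:ℝ)..x, Real.exp (ρ * t) ≤ max 1 (Real.exp (ρ * x)) / |ρ| := by
  have hint : ∫ t in (0:ℝ)..x, Real.exp (ρ * t) = (Real.exp (ρ * x) - 1) / ρ := by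
    simp [intervalIntegral.integral_comp_mul_left (fun t => Real.exp t) hρ, div_eq_inv_mul]
  rw [hint]
  rcases hρ.lt_or_gt with hneg | hpos
  · rw [abs_of_neg hneg, ← neg_div_neg_eq, neg_sub]
    exact div_le_div_of_nonneg_right
      (by linarith [Real.exp_pos (ρ * x), le_max_left 1 (Real.exp (ρ * x))]) (by linarith)
  · rw [abs_of_pos hpos]
    exact div_le_div_of_nonneg_right
      (by linarith [le_max_right 1 (Real.exp (ρ * x))]) hpos.le

lemma norm_integral_mul_cexp_le {K : ℝ → ℂ} {w : ℂ} {M x : ℝ} (hw : w.re ≠ 0) (hx : 0 ≤ x)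
    (hK : ∀ t ∈ Icc 0 x, ‖K t‖ ≤ M) :
    ‖∫ t in (0:ℝ)..x, K t * cexp (w * t)‖ ≤ M / |w.re| * max 1 ‖cexp (w * x)‖ := by
  have hM : 0 ≤ M := (norm_nonneg _).trans (hK 0 ⟨le_rfl, hx⟩)
  have hnorm : ∀ t : ℝ, ‖cexp (w * t)‖ = Real.exp (w.re * t) := by
    intro t
    rw [Complex.norm_exp, Complex.re_mul_ofReal]
  calc ‖∫ t in (0:ℝ)..x, K t * cexp (w * t)‖
      ≤ ∫ t in (0:ℝ)..x, M * Real.exp (w.re * t) := by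
        refine intervalIntegral.norm_integral_le_of_norm_le hx
          (ae_of_all _ fun t ht => ?_) (Continuous.intervalIntegrable (by fun_prop) _ _)
        rw [norm_mul, hnorm]
        gcongr
        exact hK t (Ioc_subset_Icc_self ht)
    _ ≤ M * (max 1 (Real.exp (w.re * x)) / |w.re|) := by
        rw [intervalIntegral.integral_const_mul]
        gcongr
        exact integral_exp_mul_le_max_div_abs hw
    _ = M / |w.re| * max 1 ‖cexp (w * x)‖ := by
        rw [hnorm]
        ring

lemma re_I_mul_ofReal_mul (a : ℝ) (z : ℂ) : (I * a * z).re = -(a * z.im) := by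
  simp [Complex.mul_re]

lemma norm_cexp_I_mul_ofReal_mul (a : ℝ) (z : ℂ) (x : ℝ) :
    ‖cexp (I * a * z * x)‖ = Real.exp (-(a * z.im) * x) := by
  rw [Complex.norm_exp, Complex.re_mul_ofReal, re_I_mul_ofReal_mul]

lemma max_one_norm_cexp_I_mul_le {a c x : ℝ} {z : ℂ} (ha : a ≤ 0) (hac : a ≤ c)
    (hz : 0 ≤ z.im) (hx : 0 ≤ x) :
    max 1 ‖cexp (I * c * z * x)‖ ≤ ‖cexp (I * a * z * x)‖ := by
  rw [norm_cexp_I_mul_ofReal_mul, norm_cexp_I_mul_ofReal_mul]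
  refine max_le (Real.one_le_exp ?_) (Real.exp_le_exp.2 ?_)
  · nlinarith [mul_nonneg (neg_nonneg.2 ha) hz]
  · nlinarith [mul_le_mul_of_nonneg_right hac hz]

lemma norm_integral_mul_cexp_I_mul_le {K : ℝ → ℂ} {c M x : ℝ} {z : ℂ} (hc : c ≠ 0)
    (hz : 0 < z.im) (hx : 0 ≤ x) (hK : ∀ t ∈ Icc 0 x, ‖K t‖ ≤ M) :
    ‖∫ t in (0:ℝ)..x, K t * cexp (I * c * z * t)‖
      ≤ M / (|c| * z.im) * max 1 ‖cexp (I * c * z * x)‖ := by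
  have hre : (I * c * z).re ≠ 0 := by
    rw [re_I_mul_ofReal_mul]
    exact neg_ne_zero.2 (mul_ne_zero hc hz.ne')
  simpa only [re_I_mul_ofReal_mul, abs_neg, abs_mul, abs_of_pos hz]
    using norm_integral_mul_cexp_le hre hx hK

theorem stmt2_general (φ : ℝ → ℂ → ℂ) (K₁₁ K₁₂ : ℝ → ℝ → ℂ) (a b : ℝ) (ha : a < 0) (hb : 0 < b)
    (M : ℝ) (hM₁ : ∀ x t : ℝ, 0 ≤ t → t ≤ x → x ≤ 1 → ‖K₁₁ x t‖ ≤ M)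
    (hM₂ : ∀ x t : ℝ, 0 ≤ t → t ≤ x → x ≤ 1 → ‖K₁₂ x t‖ ≤ M)
    (hrep : ∀ x ∈ Icc (0:ℝ) 1, ∀ lam : ℂ,
      φ x lam = Complex.exp (Complex.I * a * lam * x)
        + (∫ t in (0:ℝ)..x, K₁₁ x t * Complex.exp (Complex.I * a * lam * t))
        + (∫ t in (0:ℝ)..x, K₁₂ x t * Complex.exp (Complex.I * b * lam * t))) :
    ∃ C : ℝ, 0 < C ∧ ∀ lam : ℂ, 0 < lam.im → ∀ x ∈ Icc (0:ℝ) 1,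
      ‖φ x lam - Complex.exp (Complex.I * a * lam * x)‖
        ≤ C / lam.im * ‖Complex.exp (Complex.I * a * lam * x)‖ := by
  have hM : 0 ≤ M := (norm_nonneg _).trans (hM₁ 0 0 le_rfl le_rfl zero_le_one)
  have hcoef : 0 ≤ M * (1 / |a| + 1 / |b|) := by positivity
  refine ⟨M * (1 / |a| + 1 / |b|) + 1, by linarith, fun lam hs x hx => ?_⟩
  set E := ‖cexp (I * a * lam * x)‖
  have h₁ : ‖∫ t in (0:ℝ)..x, K₁₁ x t * cexp (I * a * lam * t)‖ ≤ M / (|a| * lam.im) * E :=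
    (norm_integral_mul_cexp_I_mul_le ha.ne hs hx.1 fun t ht => hM₁ x t ht.1 ht.2 hx.2).trans
      (by gcongr; exact max_one_norm_cexp_I_mul_le ha.le le_rfl hs.le hx.1)
  have h₂ : ‖∫ t in (0:ℝ)..x, K₁₂ x t * cexp (I * b * lam * t)‖ ≤ M / (|b| * lam.im) * E :=
    (norm_integral_mul_cexp_I_mul_le hb.ne' hs hx.1 fun t ht => hM₂ x t ht.1 ht.2 hx.2).trans
      (by gcongr; exact max_one_norm_cexp_I_mul_le ha.le (ha.trans hb).le hs.le hx.1)
  rw [hrep x hx lam, add_assoc, add_sub_cancel_left]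
  calc _ ≤ _ := norm_add_le _ _
    _ ≤ M / (|a| * lam.im) * E + M / (|b| * lam.im) * E := add_le_add h₁ h₂
    _ = M * (1 / |a| + 1 / |b|) / lam.im * E := by
        have : |a| ≠ 0 := abs_ne_zero.2 ha.ne
        have : |b| ≠ 0 := abs_ne_zero.2 hb.ne'
        field_simp
    _ ≤ _ := by gcongr; linarith

/-- If `φ(x,λ) = e^{iaλx} + ∫₀ˣ K₁₁(x,t) e^{iaλt} dt + ∫₀ˣ K₁₂(x,t) e^{ibλt} dt`
with bounded measurable kernels on the triangle and `a < 0 < b`, then there is `C` such that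
for all `λ` with `Im λ > 0` and `x ∈ [0,1]`,
`|φ(x,λ) − e^{iaλx}| ≤ (C / Im λ)·|e^{iaλx}|`. -/
theorem stmt2 (φ : ℝ → ℂ → ℂ) (K₁₁ K₁₂ : ℝ → ℝ → ℂ) (a b : ℝ) (ha : a < 0) (hb : 0 < b)
    (hmeas₁ : Measurable (fun p : ℝ × ℝ => K₁₁ p.1 p.2))
    (hmeas₂ : Measurable (fun p : ℝ × ℝ => K₁₂ p.1 p.2))
    (M : ℝ) (hM₁ : ∀ x t : ℝ, 0 ≤ t → t ≤ x → x ≤ 1 → ‖K₁₁ x t‖ ≤ M)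
    (hM₂ : ∀ x t : ℝ, 0 ≤ t → t ≤ x → x ≤ 1 → ‖K₁₂ x t‖ ≤ M)
    (hrep : ∀ x ∈ Icc (0:ℝ) 1, ∀ lam : ℂ,
      φ x lam = Complex.exp (Complex.I * a * lam * x)
        + (∫ t in (0:ℝ)..x, K₁₁ x t * Complex.exp (Complex.I * a * lam * t))
        + (∫ t in (0:ℝ)..x, K₁₂ x t * Complex.exp (Complex.I * b * lam * t))) :
    ∃ C : ℝ, 0 < C ∧ ∀ lam : ℂ, 0 < lam.im → ∀ x ∈ Icc (0:ℝ) 1,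
      ‖φ x lam - Complex.exp (Complex.I * a * lam * x)‖
        ≤ C / lam.im * ‖Complex.exp (Complex.I * a * lam * x)‖ :=
  stmt2_general φ K₁₁ K₁₂ a b ha hb M hM₁ hM₂ hrep
end

section
/- Let H be a Hilbert space, let {φₙ}ₙ∈ℤ be a Riesz basis of H, and let {ψₙ}ₙ∈ℤ be a complete system in H such that Σₙ ‖ψₙ − φₙ‖² < ∞. Then {ψₙ}ₙ∈ℤ is a Riesz basis of H. -/
/-!
After applying the operator `A` that makes `φ` orthonormal, `φ` is a Hilbert basis `e` and
`dₙ = A ψₙ - eₙ` is square-summable. The operator `S = 1 + K`, `K x = ∑ ⟪eₙ, x⟫ dₙ`, maps `eₙ` to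
`A ψₙ`, so it has dense range by completeness of `ψ`. Cutting off a finite part of `d` whose tail
has `ℓ²`-norm below `1` writes `S` as an invertible operator plus a finite-rank one. For such an
operator dense range forces invertibility: the range is closed, and `S` is onto, hence injective,
on the finite-dimensional range of the perturbation. Then `S⁻¹ A` maps `ψ` onto `e`.
-/

open Submodule

/-- A system `ψ` indexed by `ℤ` is a Riesz basis of the Hilbert space `H` if some bounded
invertible operator (with bounded inverse) `A` on `H` maps it to an orthonormal basis. -/
def IsRieszBasis {H : Type*} [NormedAddCommGroup H] [InnerProductSpace ℂ H]
    (ψ : ℤ → H) : Prop :=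
  ∃ A : H ≃L[ℂ] H, Orthonormal ℂ (fun n => A (ψ n)) ∧
    (Submodule.span ℂ (Set.range fun n => A (ψ n))).topologicalClosure = ⊤

theorem LinearMap.injective_one_add_of_surjective {𝕜 V : Type*} [DivisionRing 𝕜] [AddCommGroup V]
    [Module 𝕜 V] (f : V →ₗ[𝕜] V) [FiniteDimensional 𝕜 (LinearMap.range f)]
    (hsurj : Function.Surjective (1 + f : V →ₗ[𝕜] V)) :
    Function.Injective (1 + f : V →ₗ[𝕜] V) := by
  set W := LinearMap.range f
  have hW (x : V) : (1 + f) x ∈ W ↔ x ∈ W := by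
    have hfx : f x ∈ W := LinearMap.mem_range_self f x
    simp only [LinearMap.add_apply, Module.End.one_apply]
    exact ⟨fun h => by simpa using W.sub_mem h hfx, fun h => W.add_mem h hfx⟩
  -- `1 + f` maps the finite-dimensional space `W` onto itself, so it is injective on `W`, which
  -- contains its kernel.
  let g : W →ₗ[𝕜] W := (1 + f).restrict fun x => (hW x).2
  have hg : Function.Injective g := LinearMap.injective_iff_surjective.mpr fun w => by
    obtain ⟨x, hx⟩ := hsurj w
    exact ⟨⟨x, (hW x).1 (hx ▸ w.2)⟩, Subtype.ext hx⟩
  refine (injective_iff_map_eq_zero _).mpr fun x hx => ?_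
  have hxW : x ∈ W := (hW x).1 (hx ▸ W.zero_mem)
  exact congrArg Subtype.val (hg (a₁ := ⟨x, hxW⟩) (a₂ := 0) (Subtype.ext (by simpa [g] using hx)))

namespace ContinuousLinearMap

variable {𝕜 E : Type*} [NontriviallyNormedField 𝕜] [CompleteSpace 𝕜] [NormedAddCommGroup E]
  [NormedSpace 𝕜 E]

theorem isClosed_range_one_add (F : E →L[𝕜] E) [FiniteDimensional 𝕜 F.range] :
    IsClosed (Set.range (1 + F : E →L[𝕜] E)) := by
  -- If `F y = (1 + F) w` then `y = (1 + F) (y - w)`.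
  have hrange : Set.range (1 + F : E →L[𝕜] E) =
      F ⁻¹' (F.range.map ((1 + F : E →L[𝕜] E) : E →ₗ[𝕜] E)) := by
    ext y
    constructor
    · rintro ⟨x, rfl⟩
      exact ⟨F x, LinearMap.mem_range_self _ x, by simp⟩
    · rintro ⟨-, ⟨z, rfl⟩, hz⟩
      refine ⟨y - F z, ?_⟩
      simp only [coe_coe, add_apply, map_sub] at hz ⊢
      rw [← hz]
      abel
  rw [hrange]
  exact (closed_of_finiteDimensional _).preimage F.continuous

theorem bijective_one_add_of_denseRange (F : E →L[𝕜] E)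
    [FiniteDimensional 𝕜 F.range] (hdense : DenseRange (1 + F : E →L[𝕜] E)) :
    Function.Bijective (1 + F : E →L[𝕜] E) := by
  have hsurj : Function.Surjective (1 + F : E →L[𝕜] E) := by
    rw [← Set.range_eq_univ, ← (isClosed_range_one_add F).closure_eq]
    exact hdense.closure_range
  refine ⟨?_, hsurj⟩
  have := (F : E →ₗ[𝕜] E).injective_one_add_of_surjective
  rw [← toLinearMap_one, ← toLinearMap_add] at this
  exact this hsurj

theorem isUnit_add_of_isUnit_of_denseRange [CompleteSpace E] {U F : E →L[𝕜] E}
    (hU : IsUnit U) [FiniteDimensional 𝕜 F.range] (hdense : DenseRange (U + F)) :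
    IsUnit (U + F) := by
  obtain ⟨u, rfl⟩ := hU
  have hfactor : (u : E →L[𝕜] E) + F = u * (1 + (↑u⁻¹ : E →L[𝕜] E) * F) := by
    rw [mul_add, mul_one, ← mul_assoc, u.mul_inv, one_mul]
  have : FiniteDimensional 𝕜 ((↑u⁻¹ : E →L[𝕜] E) * F : E →L[𝕜] E).range := by
    rw [toLinearMap_mul, Module.End.mul_eq_comp, LinearMap.range_comp]
    infer_instance
  have hdense' : DenseRange (1 + (↑u⁻¹ : E →L[𝕜] E) * F : E →L[𝕜] E) := by
    have := (isUnit_iff_bijective.mp u⁻¹.isUnit).surjective.denseRange.comp hdense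
      (↑u⁻¹ : E →L[𝕜] E).continuous
    rwa [hfactor, ← FunLike.coe_mul_eq_comp, ← mul_assoc, u.inv_mul, one_mul] at this
  rw [hfactor]
  exact u.isUnit.mul (isUnit_iff_bijective.mpr (bijective_one_add_of_denseRange _ hdense'))

theorem isUnit_one_add_of_norm_sub_lt_one [CompleteSpace E] {K F : E →L[𝕜] E}
    [FiniteDimensional 𝕜 F.range] (hKF : ‖K - F‖ < 1) (hdense : DenseRange (1 + K : E →L[𝕜] E)) :
    IsUnit (1 + K) := by
  have hU : IsUnit (1 - (F - K)) := isUnit_one_sub_of_norm_lt_one (by rwa [norm_sub_rev])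
  have hsplit : (1 + K : E →L[𝕜] E) = (1 - (F - K)) + F := by abel
  rw [hsplit] at hdense ⊢
  exact isUnit_add_of_isUnit_of_denseRange hU hdense

end ContinuousLinearMap

namespace HilbertBasis

variable {ι 𝕜 H E : Type*} [RCLike 𝕜] [NormedAddCommGroup H] [InnerProductSpace 𝕜 H]
  [NormedAddCommGroup E] (b : HilbertBasis ι 𝕜 H) {d : ι → E}

theorem exists_hasSum_norm_repr_mul_norm_le (hd : Summable fun i => ‖d i‖ ^ 2) (x : H) :
    ∃ C ≤ ‖x‖ * √(∑' i, ‖d i‖ ^ 2), HasSum (fun i => ‖b.repr x i‖ * ‖d i‖) C := by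
  have hrepr : HasSum (fun i => ‖b.repr x i‖ ^ (2 : ℝ)) (‖x‖ ^ (2 : ℝ)) := by
    simpa [b.repr.norm_map] using lp.hasSum_norm (p := 2) (by norm_num) (b.repr x)
  have hd' : HasSum (fun i => ‖d i‖ ^ (2 : ℝ)) (√(∑' i, ‖d i‖ ^ 2) ^ (2 : ℝ)) := by
    simpa [Real.sq_sqrt (tsum_nonneg fun i => sq_nonneg ‖d i‖)] using hd.hasSum
  obtain ⟨C, -, hC, hsum⟩ := Real.inner_le_Lp_mul_Lq_hasSum_of_nonneg .two_two (norm_nonneg x)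
    (Real.sqrt_nonneg _) (fun i => norm_nonneg _) (fun i => norm_nonneg _) hrepr hd'
  exact ⟨C, hC, hsum⟩

variable [NormedSpace 𝕜 E]

theorem apply_eq_of_hasSum_repr_smul {K : H →L[𝕜] E}
    (hK : ∀ x, HasSum (fun i => b.repr x i • d i) (K x)) (i : ι) : K (b i) = d i := by
  classical
  refine (hK (b i)).unique (hasSum_single i fun j hj => ?_) |>.trans ?_
  · simp [b.repr_self, hj]
  · simp [b.repr_self]

variable [CompleteSpace E]

theorem exists_hasSum_repr_smul (hd : Summable fun i => ‖d i‖ ^ 2) :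
    ∃ K : H →L[𝕜] E, (∀ x, HasSum (fun i => b.repr x i • d i) (K x)) ∧
      ‖K‖ ≤ √(∑' i, ‖d i‖ ^ 2) := by
  choose C hC hCsum using b.exists_hasSum_norm_repr_mul_norm_le hd
  have hsum (x : H) : Summable fun i => b.repr x i • d i :=
    .of_norm (by simpa only [norm_smul] using (hCsum x).summable)
  have hbound (x : H) : ‖∑' i, b.repr x i • d i‖ ≤ √(∑' i, ‖d i‖ ^ 2) * ‖x‖ := by
    rw [mul_comm]
    exact ((hsum x).hasSum.norm_le_of_bounded (hCsum x) fun i => (norm_smul _ _).le).trans (hC x)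
  let K : H →ₗ[𝕜] E :=
    { toFun x := ∑' i, b.repr x i • d i
      map_add' x y := by
        simp only [map_add, lp.coeFn_add, Pi.add_apply, add_smul]
        exact (hsum x).tsum_add (hsum y)
      map_smul' c x := by
        simp only [map_smul, lp.coeFn_smul, Pi.smul_apply, smul_eq_mul, mul_smul,
          RingHom.id_apply]
        exact (hsum x).tsum_const_smul c }
  exact ⟨K.mkContinuous _ hbound, fun x => (hsum x).hasSum,
    K.mkContinuous_norm_le (Real.sqrt_nonneg _) hbound⟩

theorem exists_finiteDimensional_range_norm_sub_lt (hd : Summable fun i => ‖d i‖ ^ 2)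
    {K : H →L[𝕜] E} (hK : ∀ x, HasSum (fun i => b.repr x i • d i) (K x)) {ε : ℝ} (hε : 0 < ε) :
    ∃ F : H →L[𝕜] E, FiniteDimensional 𝕜 F.range ∧ ‖K - F‖ < ε := by
  classical
  obtain ⟨s, hs⟩ :
      ∃ s : Finset ι, ∑' i, ((s : Set ι)ᶜ).indicator (fun i => ‖d i‖ ^ 2) i < ε ^ 2 := by
    obtain ⟨s, hs⟩ := ((tendsto_tsum_compl_atTop_zero fun i => ‖d i‖ ^ 2).eventually
      (gt_mem_nhds (pow_pos hε 2))).exists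
    exact ⟨s, by rwa [← tsum_subtype]⟩
  set d' := ((s : Set ι)ᶜ).indicator d
  have hd'_sq : (fun i => ‖d' i‖ ^ 2) = ((s : Set ι)ᶜ).indicator (fun i => ‖d i‖ ^ 2) := by
    ext i
    by_cases hi : i ∈ s <;> simp [d', hi]
  obtain ⟨K', hK', hK'_norm⟩ := b.exists_hasSum_repr_smul (d := d') (hd'_sq ▸ hd.indicator _)
  refine ⟨K - K', ?_, ?_⟩
  · have hF (x : H) : (K - K') x = ∑ i ∈ s, b.repr x i • d i := by
      refine ((hK x).sub (hK' x)).unique ?_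
      have hfin : HasSum (fun i => b.repr x i • d i - b.repr x i • d' i)
          (∑ i ∈ s, (b.repr x i • d i - b.repr x i • d' i)) :=
        hasSum_sum_of_ne_finset_zero fun i hi => by simp [d', hi]
      convert hfin using 1
      exact Finset.sum_congr rfl fun i hi => by simp [d', hi]
    have := FiniteDimensional.span_finset 𝕜 (s.image d)
    refine Submodule.finiteDimensional_of_le (S₂ := span 𝕜 (s.image d)) ?_
    rintro - ⟨x, rfl⟩
    rw [ContinuousLinearMap.coe_coe, hF]
    exact sum_mem fun i hi => smul_mem _ _ (subset_span (by simpa using ⟨i, hi, rfl⟩))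
  · rw [sub_sub_cancel]
    calc ‖K'‖ ≤ √(∑' i, ‖d' i‖ ^ 2) := hK'_norm
      _ < ε := by rw [hd'_sq]; exact (Real.sqrt_lt' hε).mpr hs

end HilbertBasis

theorem ContinuousLinearEquiv.topologicalClosure_span_range_comp_eq_top {R E F ι : Type*} [Semiring R]
    [AddCommMonoid E] [Module R E] [TopologicalSpace E] [ContinuousConstSMul R E] [ContinuousAdd E]
    [AddCommMonoid F] [Module R F] [TopologicalSpace F] [ContinuousConstSMul R F] [ContinuousAdd F]
    (A : E ≃L[R] F) {v : ι → E}
    (hv : (span R (Set.range v)).topologicalClosure = ⊤) :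
    (span R (Set.range (A ∘ v))).topologicalClosure = ⊤ := by
  rw [← dense_iff_topologicalClosure_eq_top] at hv ⊢
  have hmap : span R (A '' Set.range v) = (span R (Set.range v)).map (A : E →ₗ[R] F) :=
    span_image _
  rw [Set.range_comp, hmap]
  exact A.surjective.denseRange.dense_image A.continuous hv

theorem ContinuousLinearMap.denseRange_of_forall_mem_range {R E F ι : Type*} [Semiring R]
    [AddCommMonoid E] [Module R E] [TopologicalSpace E] [AddCommMonoid F] [Module R F]
    [TopologicalSpace F] [ContinuousConstSMul R F] [ContinuousAdd F] (T : E →L[R] F) {v : ι → F}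
    (hv : (span R (Set.range v)).topologicalClosure = ⊤) (hT : ∀ i, v i ∈ Set.range T) :
    DenseRange T := by
  have hspan : span R (Set.range v) ≤ T.range := by
    rw [span_le]
    rintro - ⟨i, rfl⟩
    exact hT i
  rw [← SetLike.coe_subset_coe, LinearMap.coe_range, coe_coe] at hspan
  exact (dense_iff_topologicalClosure_eq_top.mpr hv).mono hspan

theorem ContinuousLinearMap.summable_sq_norm_comp {𝕜 E F ι : Type*} [NontriviallyNormedField 𝕜]
    [SeminormedAddCommGroup E] [NormedSpace 𝕜 E] [SeminormedAddCommGroup F] [NormedSpace 𝕜 F]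
    (T : E →L[𝕜] F) {v : ι → E} (hv : Summable fun i => ‖v i‖ ^ 2) :
    Summable fun i => ‖T (v i)‖ ^ 2 :=
  .of_nonneg_of_le (fun i => sq_nonneg _)
    (fun i => by rw [← mul_pow]; exact pow_le_pow_left₀ (norm_nonneg _) (T.le_opNorm _) 2)
    (hv.mul_left (‖T‖ ^ 2))

theorem isRieszBasis_iff_exists_hilbertBasis {H : Type*} [NormedAddCommGroup H]
    [InnerProductSpace ℂ H] [CompleteSpace H] {ψ : ℤ → H} :
    IsRieszBasis ψ ↔ ∃ (A : H ≃L[ℂ] H) (e : HilbertBasis ℤ ℂ H), ∀ n, A (ψ n) = e n := by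
  constructor
  · rintro ⟨A, hON, hspan⟩
    exact ⟨A, HilbertBasis.mk hON hspan.ge, fun n => by rw [HilbertBasis.coe_mk]⟩
  · rintro ⟨A, e, hAe⟩
    refine ⟨A, ?_, ?_⟩ <;> rw [show (fun n => A (ψ n)) = e from funext hAe]
    · exact e.orthonormal
    · exact e.dense_span

/-- Bari's theorem: if `{φₙ}` is a Riesz basis of `H`, `{ψₙ}` is complete in
`H` and `Σₙ ‖ψₙ − φₙ‖² < ∞`, then `{ψₙ}` is a Riesz basis of `H`. -/
theorem stmt8 {H : Type*} [NormedAddCommGroup H] [InnerProductSpace ℂ H] [CompleteSpace H]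
    (φ ψ : ℤ → H) (hφ : IsRieszBasis φ)
    (hcomplete : (Submodule.span ℂ (Set.range ψ)).topologicalClosure = ⊤)
    (hsum : Summable fun n : ℤ => ‖ψ n - φ n‖ ^ 2) :
    IsRieszBasis ψ := by
  obtain ⟨A, e, hAφ⟩ := isRieszBasis_iff_exists_hilbertBasis.mp hφ
  set d : ℤ → H := fun n => A (ψ n) - e n
  have hd : Summable fun n => ‖d n‖ ^ 2 := by
    convert (A : H →L[ℂ] H).summable_sq_norm_comp hsum using 3 with n
    simp [d, hAφ]
  obtain ⟨K, hK, -⟩ := e.exists_hasSum_repr_smul hd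
  have hKe (n : ℤ) : (1 + K) (e n) = A (ψ n) := by
    simp [e.apply_eq_of_hasSum_repr_smul hK n, d]
  have hdense : DenseRange (1 + K : H →L[ℂ] H) :=
    (1 + K).denseRange_of_forall_mem_range (A.topologicalClosure_span_range_comp_eq_top hcomplete)
      fun n => ⟨e n, hKe n⟩
  obtain ⟨F, hF, hKF⟩ := e.exists_finiteDimensional_range_norm_sub_lt hd hK one_pos
  have hunit := ContinuousLinearMap.isUnit_one_add_of_norm_sub_lt_one hKF hdense
  refine isRieszBasis_iff_exists_hilbertBasis.mpr
    ⟨A.trans (ContinuousLinearEquiv.ofUnit hunit.unit).symm, e, fun n => ?_⟩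
  rw [ContinuousLinearEquiv.trans_apply, ContinuousLinearEquiv.symm_apply_eq]
  exact (hKe n).symm
end
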